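/- Let σ : ℝ → ℝ be a polynomial, s ∈ ℝ, z ∈ ℝⁿ, and set y = σ(∑_{j∈N} z_j + s), ỹ = σ(s). Let N⁺ = {j : z_j > 0} and N⁻ = {j : z_j ≤ 0}, and assume ∑_{j ∈ N⁺} z_j ≠ 0. Then for every i ∈ N⁺, the Deep Taylor attribution a_i = (z_i / ∑_{j∈N⁺} z_j) · (y − ỹ) satisfies a_i = ∑_{κ ∈ Ω_i} φ(κ) + ∑_{S ⊆ N, |S| > 1, i ∈ S} ∑_{κ ∈ Ω_S} (κ_i / ∑_{j∈N⁺} κ_j) · I(κ) + ∑_{∅ ≠ S ⊆ N⁻} ∑_{κ ∈ Ω_S} (z_i / ∑_{j∈N⁺} z_j) · I(κ); moreover the Deep Taylor attribution of every i ∈ N⁻ is 0. -/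

import Mathlib

/-!
Taylor's formula for `σ` at `s` and the multinomial theorem write `y - ỹ` as the sum of the
effects `I(κ)` over all `κ ≠ 0`. The right-hand side gives `I(κ)` the weight
`κᵢ / ∑_{N⁺} κⱼ` when the support of `κ` meets `N⁺`, and `zᵢ / ∑_{N⁺} zⱼ` otherwise.
In each degree `m`, the identity `κᵢ · multinomial κ = m · multinomial (κ - eᵢ)` shows that
the total weight `κⱼ / ∑_{N⁺} κ` carried by `j ∈ N⁺` is proportional to `zⱼ`. These weights
sum to one over `N⁺` whenever the support of `κ` meets `N⁺`, so input `i` receives exactly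
the fraction `zᵢ / ∑_{N⁺} zⱼ` of every degree.
-/

open Finset

/-- The Taylor interaction effect `I(κ)` of the one-layer module
`g(u) = σ(∑ⱼ uⱼ + s)` expanded at the baseline `0` and evaluated at `z`:
`I(κ) = (σ^{(|κ|)}(s)/|κ|!) · (|κ|!/∏ⱼ κⱼ!) · ∏ⱼ zⱼ^{κⱼ}`. -/
noncomputable def taylorEffect {n : ℕ} (σ : Polynomial ℝ) (s : ℝ) (z : Fin n → ℝ)
    (κ : Fin n → ℕ) : ℝ :=
  ((Polynomial.derivative^[∑ j, κ j] σ).eval s / ((∑ j, κ j).factorial : ℝ)) *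
    ((Nat.multinomial Finset.univ κ : ℕ) : ℝ) * ∏ j, z j ^ κ j

/-- The Deep Taylor attribution of input `i` for the module `g(u) = σ(∑ⱼ uⱼ + s)`:
`aᵢ = (zᵢ/∑_{j∈N⁺} zⱼ)·(y − ỹ)` for `i ∈ N⁺` and `aᵢ = 0` for `i ∈ N⁻`. -/
noncomputable def deepTaylorAttr {n : ℕ} (σ : Polynomial ℝ) (s : ℝ) (z : Fin n → ℝ)
    (i : Fin n) : ℝ :=
  if 0 < z i then
    (z i / ∑ j ∈ univ.filter (fun j => 0 < z j), z j) *
      (σ.eval (∑ j, z j + s) - σ.eval s)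
  else 0

theorem Nat.succ_mul_multinomial_update {α : Type*} [DecidableEq α] {s : Finset α} {a : α}
    (ha : a ∈ s) (f : α → ℕ) :
    (f a + 1) * Nat.multinomial s (Function.update f a (f a + 1))
      = (∑ i ∈ s, f i + 1) * Nat.multinomial s f := by
  have hrest : ∀ j ∈ s.erase a, Function.update f a (f a + 1) j = f j :=
    fun j hj => Function.update_of_ne (ne_of_mem_erase hj) _ _
  rw [← insert_erase ha, Nat.multinomial_insert (notMem_erase a s),
    Nat.multinomial_insert (notMem_erase a s), Nat.multinomial_congr hrest,
    sum_insert (notMem_erase a s), sum_congr rfl hrest, Function.update_self, add_right_comm,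
    ← mul_assoc, ← mul_assoc, Nat.add_one_mul_choose_eq, mul_comm (f a + 1)]

theorem Finset.sum_update_add_one {ι : Type*} [DecidableEq ι] {s : Finset ι} {i : ι}
    (hi : i ∈ s) (f : ι → ℕ) :
    ∑ j ∈ s, Function.update f i (f i + 1) j = ∑ j ∈ s, f j + 1 := by
  rw [sum_update_of_mem hi, ← add_sum_erase s f hi, sdiff_singleton_eq_erase]
  ring

theorem Finset.prod_pow_update_add_one {ι R : Type*} [DecidableEq ι] [CommMonoid R]
    {s : Finset ι} {i : ι} (hi : i ∈ s) (z : ι → R) (f : ι → ℕ) :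
    ∏ j ∈ s, z j ^ Function.update f i (f i + 1) j = z i * ∏ j ∈ s, z j ^ f j := by
  simp only [Function.apply_update (fun j k => z j ^ k), prod_update_of_mem hi,
    ← mul_prod_erase s _ hi, sdiff_singleton_eq_erase, pow_succ', mul_assoc]

theorem Finset.sum_piAntidiag_succ_mul_multinomial {ι R : Type*} [Fintype ι] [DecidableEq ι]
    [CommSemiring R] (z : ι → R) (F : (ι → ℕ) → R) (i : ι) (m : ℕ) :
    ∑ κ ∈ piAntidiag univ (m + 1), (κ i : R) * Nat.multinomial univ κ * (∏ j, z j ^ κ j) * F κ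
      = (m + 1) * z i * ∑ μ ∈ piAntidiag univ m,
          Nat.multinomial univ μ * (∏ j, z j ^ μ j) * F (Function.update μ i (μ i + 1)) := by
  have hshift : ∀ κ : ι → ℕ, κ i ≠ 0 →
      Function.update (Function.update κ i (κ i - 1)) i (κ i - 1 + 1) = κ := fun κ hκ => by
    simp [Nat.sub_add_cancel (Nat.pos_of_ne_zero hκ)]
  rw [← sum_filter_of_ne (p := fun κ => κ i ≠ 0) fun κ _ h hκ => h (by simp [hκ]), mul_sum]
  symm
  refine sum_nbij' (fun μ => Function.update μ i (μ i + 1))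
    (fun κ => Function.update κ i (κ i - 1)) ?_ ?_ ?_ ?_ ?_
  · intro μ hμ
    simp only [mem_filter, mem_piAntidiag, mem_univ, implies_true, and_true] at hμ ⊢
    simp [sum_update_add_one (mem_univ i), hμ]
  · intro κ hκ
    simp only [mem_filter, mem_piAntidiag, mem_univ, implies_true, and_true] at hκ ⊢
    have := sum_update_add_one (mem_univ i) (Function.update κ i (κ i - 1))
    rw [Function.update_self, hshift κ hκ.2, hκ.1] at this
    exact (Nat.add_right_cancel this).symm
  · intro μ _
    simp
  · intro κ hκ
    simpa using hshift κ (mem_filter.1 hκ).2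
  · intro μ hμ
    have key := Nat.succ_mul_multinomial_update (mem_univ i) μ
    rw [(mem_piAntidiag.1 hμ).1] at key
    rw [Function.update_self, prod_pow_update_add_one (mem_univ i), ← Nat.cast_mul, key]
    push_cast
    ring

theorem Finset.sum_piAntidiag_share_mul_multinomial {ι : Type*} [Fintype ι] [DecidableEq ι]
    {P : Finset ι} {z : ι → ℝ} {i : ι} (hi : i ∈ P) (hP : ∑ j ∈ P, z j ≠ 0) (m : ℕ) :
    ∑ κ ∈ piAntidiag univ m,
        ((if ∑ j ∈ P, (κ j : ℝ) = 0 then z i / ∑ j ∈ P, z j else 0) + κ i / ∑ j ∈ P, (κ j : ℝ))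
          * (Nat.multinomial univ κ * ∏ j, z j ^ κ j)
      = z i / (∑ j ∈ P, z j) * (∑ j, z j) ^ m := by
  set Z := ∑ j ∈ P, z j
  set K : (ι → ℕ) → ℝ := fun κ => ∑ j ∈ P, (κ j : ℝ)
  set G : (ι → ℕ) → ℝ := fun κ => Nat.multinomial univ κ * ∏ j, z j ^ κ j
  -- writing `κ = μ + eⱼ`, the factor `(K κ)⁻¹ = (K μ + 1)⁻¹` is the same for every `j ∈ P`
  obtain ⟨C, hC⟩ : ∃ C, ∀ j ∈ P, ∑ κ ∈ piAntidiag univ m, (κ j : ℝ) / K κ * G κ = z j * C := by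
    cases m with
    | zero => exact ⟨0, fun j _ => by simp⟩
    | succ m =>
      refine ⟨(m + 1) * ∑ μ ∈ piAntidiag univ m, G μ * (K μ + 1)⁻¹, fun j hj => ?_⟩
      have hK : ∀ μ : ι → ℕ, K (Function.update μ j (μ j + 1)) = K μ + 1 := fun μ => by
        simp only [K]
        exact_mod_cast sum_update_add_one hj μ
      calc ∑ κ ∈ piAntidiag univ (m + 1), (κ j : ℝ) / K κ * G κ
          = ∑ κ ∈ piAntidiag univ (m + 1),
              (κ j : ℝ) * Nat.multinomial univ κ * (∏ l, z l ^ κ l) * (K κ)⁻¹ :=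
            sum_congr rfl fun κ _ => by simp only [G]; ring
        _ = _ := by
          rw [sum_piAntidiag_succ_mul_multinomial]
          simp only [hK, G]
          ring
  have hshares : ∑ j ∈ P, ∑ κ ∈ piAntidiag univ m, (κ j : ℝ) / K κ * G κ
      = ∑ κ ∈ piAntidiag univ m, (G κ - if K κ = 0 then G κ else 0) := by
    rw [sum_comm]
    refine sum_congr rfl fun κ _ => ?_
    rw [← sum_mul, ← sum_div]
    split_ifs with h
    · simp [K, h]
    · rw [div_self h, one_mul, sub_zero]
  have hZC : Z * C = (∑ j, z j) ^ m - ∑ κ ∈ piAntidiag univ m, if K κ = 0 then G κ else 0 := by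
    rw [sum_pow_eq_sum_piAntidiag, ← sum_sub_distrib, ← hshares, sum_congr rfl hC, sum_mul]
  rw [sum_congr rfl fun κ _ => add_mul _ _ _, sum_add_distrib, hC i hi]
  have hA : ∑ κ ∈ piAntidiag univ m, (if K κ = 0 then z i / Z else 0) * G κ
      = z i / Z * ∑ κ ∈ piAntidiag univ m, if K κ = 0 then G κ else 0 := by
    rw [mul_sum]
    exact sum_congr rfl fun κ _ => by split_ifs <;> simp
  rw [hA]
  field_simp
  linear_combination z i * hZC

theorem Polynomial.eval_add_eq_sum_range_iterate_derivative {K : Type*} [Field K] [CharZero K]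
    (p : Polynomial K) (s x : K) :
    p.eval (x + s) = ∑ m ∈ range (p.natDegree + 1),
      (Polynomial.derivative^[m] p).eval s / m.factorial * x ^ m := by
  rw [← taylor_eval, eval_eq_sum_range, natDegree_taylor]
  refine sum_congr rfl fun m _ => ?_
  rw [taylor_coeff, ← factorial_smul_hasseDeriv, LinearMap.smul_apply, eval_smul, nsmul_eq_mul,
    mul_div_cancel_left₀ _ (Nat.cast_ne_zero.2 m.factorial_ne_zero)]

theorem tsum_eq_sum_range_piAntidiag {ι M : Type*} [Fintype ι] [DecidableEq ι] [AddCommMonoid M]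
    [TopologicalSpace M] {f : (ι → ℕ) → M} {D : ℕ} (hf : ∀ κ, D < ∑ j, κ j → f κ = 0) :
    ∑' κ, f κ = ∑ m ∈ range (D + 1), ∑ κ ∈ piAntidiag univ m, f κ := by
  rw [← sum_biUnion fun a _ b _ hab => disjoint_left.2 fun κ ha hb =>
    hab ((mem_piAntidiag.1 ha).1.symm.trans (mem_piAntidiag.1 hb).1)]
  refine tsum_eq_sum fun κ hκ => hf κ ?_
  by_contra! h
  exact hκ (mem_biUnion.2 ⟨_, mem_range.2 (Nat.lt_succ_of_le h), mem_piAntidiag.2 ⟨rfl, by simp⟩⟩)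

section TaylorEffect

variable {n : ℕ} (σ : Polynomial ℝ) (s : ℝ) (z : Fin n → ℝ)

theorem taylorEffect_eq_zero_of_natDegree_lt {κ : Fin n → ℕ} (hκ : σ.natDegree < ∑ j, κ j) :
    taylorEffect σ s z κ = 0 := by
  simp [taylorEffect, Polynomial.iterate_derivative_eq_zero hκ]

theorem taylorEffect_of_mem_piAntidiag {m : ℕ} {κ : Fin n → ℕ} (hκ : κ ∈ piAntidiag univ m) :
    taylorEffect σ s z κ = (Polynomial.derivative^[m] σ).eval s / m.factorial
      * (Nat.multinomial univ κ * ∏ j, z j ^ κ j) := by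
  rw [taylorEffect, (mem_piAntidiag.1 hκ).1, mul_assoc]

theorem tsum_ite_taylorEffect (p : (Fin n → ℕ) → Prop) [DecidablePred p] :
    ∑' κ, (if p κ then taylorEffect σ s z κ else 0)
      = ∑ m ∈ range (σ.natDegree + 1), ∑ κ ∈ piAntidiag univ m,
          if p κ then taylorEffect σ s z κ else 0 :=
  tsum_eq_sum_range_piAntidiag fun κ hκ => by
    simp [taylorEffect_eq_zero_of_natDegree_lt σ s z hκ]

theorem tsum_ite_mul_taylorEffect (p : (Fin n → ℕ) → Prop) [DecidablePred p]
    (c : (Fin n → ℕ) → ℝ) :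
    ∑' κ, (if p κ then c κ * taylorEffect σ s z κ else 0)
      = ∑ m ∈ range (σ.natDegree + 1), ∑ κ ∈ piAntidiag univ m,
          if p κ then c κ * taylorEffect σ s z κ else 0 :=
  tsum_eq_sum_range_piAntidiag fun κ hκ => by
    simp [taylorEffect_eq_zero_of_natDegree_lt σ s z hκ]

end TaylorEffect

section Support

variable {ι : Type*} [Fintype ι]

theorem ite_support_eq_singleton_add_ite_interaction [DecidableEq ι] {P : Finset ι} {i : ι}
    (hi : i ∈ P) (κ : ι → ℕ) (x : ℝ) :
    ((if univ.filter (fun j => κ j ≠ 0) = {i} then x else 0)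
      + if univ.filter (fun j => κ j ≠ 0)
          ∈ (univ : Finset ι).powerset.filter (fun S => 1 < S.card ∧ i ∈ S)
        then (κ i : ℝ) / (∑ j ∈ P, (κ j : ℝ)) * x else 0)
      = (κ i : ℝ) / (∑ j ∈ P, (κ j : ℝ)) * x := by
  set T := univ.filter (fun j => κ j ≠ 0)
  by_cases hκi : κ i = 0
  · have hiT : i ∉ T := by simp [T, hκi]
    have hT : T ≠ {i} := fun h => hiT (h ▸ mem_singleton_self i)
    simp [hT, hiT, hκi]
  have hiT : i ∈ T := by simp [T, hκi]
  by_cases hT : T = {i}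
  · have hsum : ∑ j ∈ P, κ j = κ i := sum_eq_single_of_mem i hi fun j _ hji => by
      by_contra hκj
      exact hji (mem_singleton.1 (hT ▸ (by simp [T, hκj] : j ∈ T)))
    have hratio : (κ i : ℝ) / (∑ j ∈ P, (κ j : ℝ)) = 1 := by
      rw [← Nat.cast_sum, hsum, div_self (Nat.cast_ne_zero.2 hκi)]
    simp [hT, hratio]
  · have hcard : 1 < T.card :=
      one_lt_card_iff_nontrivial.2 ((nontrivial_iff_ne_singleton hiT).2 hT)
    simp [hT, hcard, hiT]

theorem support_subset_nonpos_iff {z : ι → ℝ} (κ : ι → ℕ) :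
    univ.filter (fun j => κ j ≠ 0) ⊆ univ.filter (fun j => z j ≤ 0)
      ↔ ∑ j ∈ univ.filter (fun j => 0 < z j), (κ j : ℝ) = 0 := by
  rw [sum_eq_zero_iff_of_nonneg fun j _ => Nat.cast_nonneg _]
  simp only [subset_iff, mem_filter, mem_univ, true_and, Nat.cast_eq_zero]
  exact forall_congr' fun j => by rw [← not_lt, not_imp_not]

theorem ite_support_nonpos [DecidableEq ι] {z : ι → ℝ} {κ : ι → ℕ} (hκ : κ ≠ 0) (c x : ℝ) :
    (if univ.filter (fun j => κ j ≠ 0)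
          ∈ (univ.filter (fun j => z j ≤ 0)).powerset.filter (fun S => S.Nonempty)
        then c * x else 0)
      = (if ∑ j ∈ univ.filter (fun j => 0 < z j), (κ j : ℝ) = 0 then c else 0) * x := by
  have hT : (univ.filter (fun j => κ j ≠ 0)).Nonempty := by
    obtain ⟨j, hj⟩ := Function.ne_iff.1 hκ
    exact ⟨j, by simpa using hj⟩
  simp only [mem_filter, mem_powerset, hT, and_true, support_subset_nonpos_iff, ite_zero_mul]

end Support

theorem deep_taylor_general {n : ℕ} (σ : Polynomial ℝ) (s : ℝ)
    (z : Fin n → ℝ)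
    (hNp : ∑ j ∈ univ.filter (fun j => 0 < z j), z j ≠ 0) :
    (∀ i : Fin n, 0 < z i →
      deepTaylorAttr σ s z i
        = (∑' κ : Fin n → ℕ,
              if univ.filter (fun j => κ j ≠ 0) = {i} then taylorEffect σ s z κ else 0)
        + (∑ S ∈ (univ : Finset (Fin n)).powerset.filter (fun S => 1 < S.card ∧ i ∈ S),
            ∑' κ : Fin n → ℕ,
              if univ.filter (fun j => κ j ≠ 0) = S then
                ((κ i : ℝ) / ∑ j ∈ univ.filter (fun j => 0 < z j), (κ j : ℝ)) *
                  taylorEffect σ s z κ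
              else 0)
        + (∑ S ∈ (univ.filter (fun j => z j ≤ 0)).powerset.filter (fun S => S.Nonempty),
            ∑' κ : Fin n → ℕ,
              if univ.filter (fun j => κ j ≠ 0) = S then
                (z i / ∑ j ∈ univ.filter (fun j => 0 < z j), z j) *
                  taylorEffect σ s z κ
              else 0)) ∧
    (∀ i : Fin n, z i ≤ 0 → deepTaylorAttr σ s z i = 0) := by
  refine ⟨fun i hzi => ?_, fun i hzi => if_neg hzi.not_gt⟩
  have hi : i ∈ univ.filter (fun j => 0 < z j) := mem_filter.2 ⟨mem_univ i, hzi⟩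
  simp only [tsum_ite_taylorEffect, tsum_ite_mul_taylorEffect,
    sum_comm (γ := Finset (Fin n)), sum_ite_eq, ← sum_add_distrib]
  rw [deepTaylorAttr, if_pos hzi, Polynomial.eval_add_eq_sum_range_iterate_derivative,
    sum_range_succ', sum_range_succ', piAntidiag_zero, sum_singleton]
  simp only [Function.iterate_zero, id_eq, Nat.factorial_zero, Nat.cast_one, div_one, pow_zero,
    mul_one, add_sub_cancel_right, mul_sum]
  convert (add_zero _).symm using 2
  · refine sum_congr rfl fun m _ => ?_
    rw [mul_left_comm (z i / _), ← sum_piAntidiag_share_mul_multinomial hi hNp, mul_sum]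
    refine sum_congr rfl fun κ hκ => ?_
    have hκ0 : κ ≠ 0 := by rintro rfl; simp at hκ
    rw [ite_support_eq_singleton_add_ite_interaction hi, ite_support_nonpos hκ0,
      taylorEffect_of_mem_piAntidiag σ s z hκ]
    ring
  · -- the exponent `0` has empty support, which lies in none of the three classes
    simp

/-- Deep Taylor.  For a polynomial activation `σ`, with
`y = σ(∑ⱼ zⱼ + s)`, `ỹ = σ(s)`, `N⁺ = {j : zⱼ > 0}`, `N⁻ = {j : zⱼ ≤ 0}` and
`∑_{j∈N⁺} zⱼ ≠ 0`: for every `i ∈ N⁺` the Deep Taylor attribution decomposes into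
Taylor independent and interaction effects with the stated allocation ratios, and the
attribution of every `i ∈ N⁻` is `0`. -/
theorem deep_taylor {n : ℕ} (hn : 1 ≤ n) (σ : Polynomial ℝ) (s : ℝ)
    (z : Fin n → ℝ)
    (hNp : ∑ j ∈ univ.filter (fun j => 0 < z j), z j ≠ 0) :
    (∀ i : Fin n, 0 < z i →
      deepTaylorAttr σ s z i
        = (∑' κ : Fin n → ℕ,
              if univ.filter (fun j => κ j ≠ 0) = {i} then taylorEffect σ s z κ else 0)
        + (∑ S ∈ (univ : Finset (Fin n)).powerset.filter (fun S => 1 < S.card ∧ i ∈ S),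
            ∑' κ : Fin n → ℕ,
              if univ.filter (fun j => κ j ≠ 0) = S then
                ((κ i : ℝ) / ∑ j ∈ univ.filter (fun j => 0 < z j), (κ j : ℝ)) *
                  taylorEffect σ s z κ
              else 0)
        + (∑ S ∈ (univ.filter (fun j => z j ≤ 0)).powerset.filter (fun S => S.Nonempty),
            ∑' κ : Fin n → ℕ,
              if univ.filter (fun j => κ j ≠ 0) = S then
                (z i / ∑ j ∈ univ.filter (fun j => 0 < z j), z j) *
                  taylorEffect σ s z κ
              else 0)) ∧
    (∀ i : Fin n, z i ≤ 0 → deepTaylorAttr σ s z i = 0) :=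
  deep_taylor_general σ s z hNp
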